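/- arXiv:math/0002080 — 6 statements merged into one kernel-verified Lean document; each statement's English description precedes it below -/
import Mathlib

section
/- Let E be a normed vector space over ℝ (or ℂ), A : E → E an injective continuous linear map, and suppose there exist constants C > 0 and 0 < r < 1 such that ‖A^n‖ ≤ C r^n for all n ∈ ℕ. Let Y be a finite subset of E. Then there exists n₀ ∈ ℕ such that whenever ∑_{l=1}^{k} A^{n(l-1)} y_l = 0 for some y_1, …, y_k ∈ Y, some n ≥ n₀ and some k ∈ ℕ, we have y_1 = … = y_k = 0. -/
/-!
Put `T = Aⁿ` and `M = max_{y ∈ Y} ‖y‖`. In a vanishing sum `∑ₗ Tˡ yₗ` the leading digit `y₀` is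
minus the tail `∑ₗ Tˡ⁺¹ yₗ₊₁`, of norm at most `M ∑ₗ ‖A^{n(l+1)}‖ ≤ M C rⁿ / (1 - r)`. For large
`n` this is smaller than the norm of every nonzero element of `Y`, so `y₀ = 0`; cancelling one
factor `T` by injectivity then leaves a shorter vanishing sum.
-/

open Filter Finset Topology

namespace ContinuousLinearMap

theorem injective_pow {R M : Type*} [Semiring R] [TopologicalSpace M] [AddCommMonoid M]
    [Module R M] {T : M →L[R] M} (hT : Function.Injective T) (n : ℕ) :
    Function.Injective (T ^ n) := by
  rw [← coe_coe, toLinearMap_pow, Module.End.coe_pow]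
  exact hT.iterate n

theorem forall_eq_zero_of_sum_pow_apply_eq_zero {R M : Type*} [Semiring R] [TopologicalSpace M]
    [AddCommMonoid M] [Module R M] {T : M →L[R] M} (hT : Function.Injective T) {S : Set M}
    (hlead : ∀ k (y : Fin (k + 1) → M), (∀ l, y l ∈ S) →
      ∑ l : Fin (k + 1), (T ^ (l : ℕ)) (y l) = 0 → y 0 = 0) :
    ∀ k (y : Fin k → M), (∀ l, y l ∈ S) → ∑ l : Fin k, (T ^ (l : ℕ)) (y l) = 0 → ∀ l, y l = 0 := by
  intro k
  induction k with
  | zero => exact fun _ _ _ l => l.elim0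
  | succ k ih =>
    intro y hy hsum
    have hy0 : y 0 = 0 := hlead k y hy hsum
    have htail : ∑ l : Fin k, (T ^ (l : ℕ)) (y l.succ) = 0 := by
      apply hT
      rw [Fin.sum_univ_succ, hy0, map_zero, zero_add] at hsum
      simpa only [map_sum, map_zero, Fin.val_succ, pow_succ', mul_apply_eq_comp] using hsum
    exact Fin.cases hy0 (ih _ (fun l => hy l.succ) htail)

theorem norm_sum_pow_succ_apply_le {𝕜 E : Type*} [NontriviallyNormedField 𝕜]
    [SeminormedAddCommGroup E] [NormedSpace 𝕜 E] (T : E →L[𝕜] E) {k : ℕ} {y : Fin k → E}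
    {M : ℝ} (hM : ∀ l, ‖y l‖ ≤ M) :
    ‖∑ l : Fin k, (T ^ ((l : ℕ) + 1)) (y l)‖ ≤ M * ∑ l ∈ range k, ‖T ^ (l + 1)‖ := by
  rw [mul_sum, ← Fin.sum_univ_eq_sum_range (fun l => M * ‖T ^ (l + 1)‖)]
  refine (norm_sum_le _ _).trans (sum_le_sum fun l _ => ?_)
  rw [mul_comm M]
  exact le_opNorm_of_le _ (hM l)

theorem head_eq_zero_of_sum_pow_apply_eq_zero {𝕜 E : Type*} [NontriviallyNormedField 𝕜]
    [SeminormedAddCommGroup E] [NormedSpace 𝕜 E] {T : E →L[𝕜] E} {S : Set E} {M δ : ℝ}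
    (hT : ∀ k, ∑ l ∈ range k, ‖T ^ (l + 1)‖ ≤ δ) (hM : ∀ x ∈ S, ‖x‖ ≤ M)
    (hS : ∀ x ∈ S, x ≠ 0 → M * δ < ‖x‖) {k : ℕ} {y : Fin (k + 1) → E} (hy : ∀ l, y l ∈ S)
    (hsum : ∑ l : Fin (k + 1), (T ^ (l : ℕ)) (y l) = 0) : y 0 = 0 := by
  by_contra hy0
  have hM0 : 0 ≤ M := (norm_nonneg _).trans (hM _ (hy 0))
  rw [Fin.sum_univ_succ, Fin.val_zero, pow_zero, one_apply_eq_self, add_eq_zero_iff_eq_neg] at hsum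
  have hle : ‖y 0‖ ≤ M * δ := calc
    ‖y 0‖ = ‖∑ l : Fin k, (T ^ ((l : ℕ) + 1)) (y l.succ)‖ := by
      simp only [hsum, norm_neg, Fin.val_succ]
    _ ≤ M * ∑ l ∈ range k, ‖T ^ (l + 1)‖ :=
      norm_sum_pow_succ_apply_le T fun l => hM _ (hy l.succ)
    _ ≤ M * δ := mul_le_mul_of_nonneg_left (hT k) hM0
  exact (hS _ (hy 0) hy0).not_ge hle

end ContinuousLinearMap

theorem sum_norm_pow_pow_succ_le {R : Type*} [SeminormedRing R] {a : R} {C r : ℝ} (hr0 : 0 ≤ r)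
    (hr1 : r < 1) (hbound : ∀ n : ℕ, ‖a ^ n‖ ≤ C * r ^ n) {n : ℕ} (hn : 1 ≤ n) (k : ℕ) :
    ∑ l ∈ range k, ‖(a ^ n) ^ (l + 1)‖ ≤ C * (r ^ n / (1 - r)) := by
  have hC : 0 ≤ C := (norm_nonneg _).trans (by simpa using hbound 0)
  calc ∑ l ∈ range k, ‖(a ^ n) ^ (l + 1)‖
      ≤ ∑ l ∈ range k, C * r ^ (n + l) := sum_le_sum fun l _ => by
        rw [← pow_mul]
        refine (hbound _).trans (mul_le_mul_of_nonneg_left ?_ hC)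
        exact pow_le_pow_of_le_one hr0 hr1.le (by nlinarith)
    _ = C * ∑ i ∈ Ico n (n + k), r ^ i := by
        rw [sum_Ico_eq_sum_range, add_tsub_cancel_left, mul_sum]
    _ ≤ C * (r ^ n / (1 - r)) :=
        mul_le_mul_of_nonneg_left (geom_sum_Ico_le_of_lt_one hr0 hr1) hC

theorem statement4_general {E : Type*} [NormedAddCommGroup E] [NormedSpace ℝ E]
    (A : E →L[ℝ] E) (hinj : Function.Injective A)
    (C r : ℝ) (hr0 : 0 < r) (hr1 : r < 1)
    (hbound : ∀ n : ℕ, ‖A ^ n‖ ≤ C * r ^ n)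
    (Y : Finset E) :
    ∃ n₀ : ℕ, ∀ n ≥ n₀, ∀ k : ℕ, ∀ y : Fin k → E, (∀ l, y l ∈ Y) →
      (∑ l : Fin k, (A ^ (n * (l : ℕ))) (y l)) = 0 → ∀ l, y l = 0 := by
  obtain ⟨M, hM⟩ := (Y.image (‖·‖)).exists_le
  have htail : Tendsto (fun n => M * (C * (r ^ n / (1 - r)))) atTop (𝓝 0) := by
    simpa using ((tendsto_pow_atTop_nhds_zero_of_lt_one hr0.le hr1).div_const (1 - r)).const_mul
      C |>.const_mul M
  have hsmall : ∀ᶠ n in atTop, 1 ≤ n ∧ ∀ x ∈ Y, x ≠ 0 → M * (C * (r ^ n / (1 - r))) < ‖x‖ :=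
    (eventually_ge_atTop 1).and <| (eventually_all_finset Y).2 fun _ _ =>
      eventually_imp_distrib_left.2 fun hx => htail.eventually_lt_const (norm_pos_iff.2 hx)
  obtain ⟨n₀, hn₀⟩ := eventually_atTop.1 hsmall
  refine ⟨n₀, fun n hn k y hy hsum => ?_⟩
  obtain ⟨hn1, hsmall_n⟩ := hn₀ n hn
  simp only [pow_mul] at hsum
  exact ContinuousLinearMap.forall_eq_zero_of_sum_pow_apply_eq_zero
    (ContinuousLinearMap.injective_pow hinj n) (S := Y)
    (fun _ _ hy hsum => ContinuousLinearMap.head_eq_zero_of_sum_pow_apply_eq_zero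
      (sum_norm_pow_pow_succ_le hr0.le hr1 hbound hn1) (fun x hx => hM _ (mem_image_of_mem _ hx))
      hsmall_n hy hsum) k y hy hsum

/-- Let `E` be a real normed vector space, `A : E → E` an injective continuous
linear map with `‖A^n‖ ≤ C r^n` for some `C > 0`, `0 < r < 1`, and all `n ∈ ℕ`. Let `Y` be a
finite subset of `E`. Then there exists `n₀` such that whenever
`∑_{l=1}^{k} A^{n(l-1)} y_l = 0` for `y_1, …, y_k ∈ Y`, `n ≥ n₀`, `k ∈ ℕ`, we have
`y_1 = … = y_k = 0`. -/
theorem statement4 {E : Type*} [NormedAddCommGroup E] [NormedSpace ℝ E]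
    (A : E →L[ℝ] E) (hinj : Function.Injective A)
    (C r : ℝ) (hC : 0 < C) (hr0 : 0 < r) (hr1 : r < 1)
    (hbound : ∀ n : ℕ, ‖A ^ n‖ ≤ C * r ^ n)
    (Y : Finset E) :
    ∃ n₀ : ℕ, ∀ n ≥ n₀, ∀ k : ℕ, ∀ y : Fin k → E, (∀ l, y l ∈ Y) →
      (∑ l : Fin k, (A ^ (n * (l : ℕ))) (y l)) = 0 → ∀ l, y l = 0 :=
  statement4_general A hinj C r hr0 hr1 hbound Y
end

section
/- Let E be a normed vector space over ℝ (or ℂ), A : E → E an invertible continuous linear map with continuous inverse, and suppose there exist constants C > 0 and 0 < r < 1 such that ‖A^{-n}‖ ≤ C r^n for all n ∈ ℕ. Let Y be a finite subset of E. Then there exists n₀ ∈ ℕ such that whenever ∑_{l=1}^{k} A^{n(l-1)} y_l = 0 for some y_1, …, y_k ∈ Y, some n ≥ n₀ and some k ∈ ℕ, we have y_1 = … = y_k = 0. -/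
/-!
Let `m` be the last index with `y m ≠ 0`. Applying `A^{-nm}` to the relation expresses `y m` as
`-∑_{l<m} A^{-n(m-l)} y l`, whose norm is at most `C M r^n / (1 - r)` when `M` bounds the norms
on `Y`. For large `n` this is smaller than the least norm of a nonzero element of `Y`.
-/

open Finset Filter Topology

theorem Finset.exists_pos_le_norm_of_ne_zero {E : Type*} [NormedAddCommGroup E] (Y : Finset E) :
    ∃ δ > 0, ∀ y ∈ Y, y ≠ 0 → δ ≤ ‖y‖ := by
  have : ∀ᶠ δ in 𝓝[>] (0 : ℝ), ∀ y ∈ Y, y ≠ 0 → δ ≤ ‖y‖ :=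
    (eventually_all_finset Y).2 fun y _ => by
      by_cases hy : y = 0
      · simp [hy]
      · exact nhdsWithin_le_nhds
          ((eventually_le_nhds (norm_pos_iff.2 hy)).mono fun _ h _ => h)
  exact (this.and self_mem_nhdsWithin).exists.imp fun δ h => ⟨h.2, h.1⟩

namespace ContinuousLinearEquiv

variable {𝕜 E : Type*} [NontriviallyNormedField 𝕜] [SeminormedAddCommGroup E]
  [NormedSpace 𝕜 E]

theorem inv_pow_apply_pow_apply (T : E ≃L[𝕜] E) {k l : ℕ} (hlk : l ≤ k) (x : E) :
    (T⁻¹ ^ k) ((T ^ l) x) = (T⁻¹ ^ (k - l)) x := by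
  have : T⁻¹ ^ k * T ^ l = T⁻¹ ^ (k - l) := by
    rw [← Nat.sub_add_cancel hlk, pow_add, Nat.add_sub_cancel, mul_assoc, inv_pow T l,
      inv_mul_cancel, mul_one]
  exact DFunLike.congr_fun this x

theorem eq_zero_of_sum_pow_apply_eq_zero (T : E ≃L[𝕜] E) {Y : Set E} {M δ : ℝ}
    (hM : ∀ y ∈ Y, ‖y‖ ≤ M) (hδ : ∀ y ∈ Y, y ≠ 0 → δ ≤ ‖y‖)
    (hT : ∀ m, (∑ j ∈ range m, ‖(T⁻¹ ^ (j + 1)).toContinuousLinearMap‖) * M < δ)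
    {k : ℕ} (y : Fin k → E) (hy : ∀ l, y l ∈ Y)
    (hsum : ∑ l : Fin k, (T ^ (l : ℕ)) (y l) = 0) :
    ∀ l, y l = 0 := by
  induction k with
  | zero => exact fun l => l.elim0
  | succ k ih =>
    rw [Fin.sum_univ_castSucc] at hsum
    by_cases hlast : y (Fin.last k) = 0
    · rw [hlast, map_zero, add_zero] at hsum
      have hinit := ih (fun l => y l.castSucc) (fun l => hy _) hsum
      exact Fin.lastCases hlast hinit
    · refine absurd (hδ _ (hy _) hlast) (not_le.2 ?_)
      have hrel : y (Fin.last k) = -∑ l : Fin k, (T⁻¹ ^ (k - l)) (y l.castSucc) := by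
        have := congrArg (T⁻¹ ^ k) hsum
        rw [map_add, map_sum, map_zero, Fin.val_last, T.inv_pow_apply_pow_apply le_rfl,
          Nat.sub_self, pow_zero,
          sum_congr rfl fun l _ => T.inv_pow_apply_pow_apply l.castSucc_lt_last.le _] at this
        exact eq_neg_of_add_eq_zero_right this
      calc ‖y (Fin.last k)‖
          ≤ ∑ l : Fin k, ‖(T⁻¹ ^ (k - l)).toContinuousLinearMap‖ * M := by
            rw [hrel, norm_neg]
            refine (norm_sum_le _ _).trans (sum_le_sum fun l _ => ?_)
            exact (T⁻¹ ^ (k - l)).toContinuousLinearMap.le_opNorm_of_le (hM _ (hy _))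
        _ = (∑ j ∈ range k, ‖(T⁻¹ ^ (j + 1)).toContinuousLinearMap‖) * M := by
            rw [sum_mul, ← Equiv.sum_comp Fin.revPerm,
              ← Fin.sum_univ_eq_sum_range
                fun j => ‖(T⁻¹ ^ (j + 1)).toContinuousLinearMap‖ * M]
            refine sum_congr rfl fun l _ => ?_
            simp only [Fin.revPerm_apply, Fin.val_rev]
            congr 4
            omega
        _ < δ := hT k

theorem sum_norm_inv_pow_pow_succ_le (A : E ≃L[𝕜] E) {C r : ℝ} (hr0 : 0 ≤ r) (hr1 : r < 1)
    (hA : ∀ n : ℕ, ‖(A⁻¹ ^ n).toContinuousLinearMap‖ ≤ C * r ^ n)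
    {n : ℕ} (hn : 1 ≤ n) (m : ℕ) :
    ∑ j ∈ range m, ‖((A ^ n)⁻¹ ^ (j + 1)).toContinuousLinearMap‖ ≤
      C * r ^ n / (1 - r) := by
  have hC : 0 ≤ C := by simpa using (norm_nonneg _).trans (hA 0)
  calc ∑ j ∈ range m, ‖((A ^ n)⁻¹ ^ (j + 1)).toContinuousLinearMap‖
      ≤ ∑ j ∈ range m, C * r ^ (n + j) := sum_le_sum fun j _ => by
        rw [← inv_pow, ← pow_mul]
        refine (hA _).trans (mul_le_mul_of_nonneg_left (pow_le_pow_of_le_one hr0 hr1.le ?_) hC)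
        nlinarith
    _ = C * ∑ i ∈ Ico n (n + m), r ^ i := by
      rw [mul_sum, sum_Ico_eq_sum_range, Nat.add_sub_cancel_left]
    _ ≤ C * r ^ n / (1 - r) := by
      rw [mul_div_assoc]
      exact mul_le_mul_of_nonneg_left (geom_sum_Ico_le_of_lt_one hr0 hr1) hC

end ContinuousLinearEquiv

theorem statement5_general {E : Type*} [NormedAddCommGroup E] [NormedSpace ℝ E]
    (A : E ≃L[ℝ] E)
    (C r : ℝ) (hr0 : 0 < r) (hr1 : r < 1)
    (hbound : ∀ n : ℕ, ‖((A⁻¹ ^ n : E ≃L[ℝ] E) : E →L[ℝ] E)‖ ≤ C * r ^ n)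
    (Y : Finset E) :
    ∃ n₀ : ℕ, ∀ n ≥ n₀, ∀ k : ℕ, ∀ y : Fin k → E, (∀ l, y l ∈ Y) →
      (∑ l : Fin k, (A ^ (n * (l : ℕ))) (y l)) = 0 → ∀ l, y l = 0 := by
  obtain ⟨δ, hδ0, hδ⟩ := Y.exists_pos_le_norm_of_ne_zero
  set M := ∑ y ∈ Y, ‖y‖
  have hM : ∀ y ∈ Y, ‖y‖ ≤ M := fun y hy =>
    single_le_sum (f := fun y => ‖y‖) (fun _ _ => norm_nonneg _) hy
  have hsmall : Tendsto (fun n => C * r ^ n / (1 - r) * M) atTop (𝓝 0) := by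
    simpa using (((tendsto_pow_atTop_nhds_zero_of_lt_one hr0.le hr1).const_mul C).div_const
      (1 - r)).mul_const M
  obtain ⟨n₀, hn₀⟩ :=
    eventually_atTop.1 ((hsmall.eventually (gt_mem_nhds hδ0)).and (eventually_ge_atTop 1))
  refine ⟨n₀, fun n hn k y hy hsum => (A ^ n).eq_zero_of_sum_pow_apply_eq_zero
    (Y := Y) hM hδ (fun m => ?_) y hy (by simpa only [pow_mul] using hsum)⟩
  exact (mul_le_mul_of_nonneg_right (A.sum_norm_inv_pow_pow_succ_le hr0.le hr1 hbound
    (hn₀ n hn).2 m) (sum_nonneg fun _ _ => norm_nonneg _)).trans_lt (hn₀ n hn).1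

/-- Let `E` be a real normed vector space, `A : E → E` an invertible continuous
linear map with continuous inverse, with `‖A^{-n}‖ ≤ C r^n` for some `C > 0`, `0 < r < 1`,
and all `n ∈ ℕ`. Let `Y` be a finite subset of `E`. Then there exists `n₀` such that
whenever `∑_{l=1}^{k} A^{n(l-1)} y_l = 0` for `y_1, …, y_k ∈ Y`, `n ≥ n₀`, `k ∈ ℕ`, we have
`y_1 = … = y_k = 0`. -/
theorem statement5 {E : Type*} [NormedAddCommGroup E] [NormedSpace ℝ E]
    (A : E ≃L[ℝ] E)
    (C r : ℝ) (hC : 0 < C) (hr0 : 0 < r) (hr1 : r < 1)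
    (hbound : ∀ n : ℕ, ‖((A⁻¹ ^ n : E ≃L[ℝ] E) : E →L[ℝ] E)‖ ≤ C * r ^ n)
    (Y : Finset E) :
    ∃ n₀ : ℕ, ∀ n ≥ n₀, ∀ k : ℕ, ∀ y : Fin k → E, (∀ l, y l ∈ Y) →
      (∑ l : Fin k, (A ^ (n * (l : ℕ))) (y l)) = 0 → ∀ l, y l = 0 :=
  statement5_general A C r hr0 hr1 hbound Y
end

section
/- Let T ∈ SL₂(ℤ) and let λ ∈ ℝ with |λ| > 1 be an eigenvalue of T. Then for every h ∈ ℤ² there exist vectors h̄₀, h̄₁, h̄₂ ∈ ℤ² and h̄ ∈ ℝ², depending only on h and T, such that for all n ∈ ℕ: T^n h = (1/(λ² − 1)) ∑_{i=0}^{2} (λ^{n+i} + λ^{−n−i}) h̄_i + λ^{−n} h̄, as an identity of vectors in ℝ². -/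
/-- Let `T ∈ SL₂(ℤ)` and `λ ∈ ℝ` with `|λ| > 1` an eigenvalue of `T`. Then
for every `h ∈ ℤ²` there exist `h̄₀, h̄₁, h̄₂ ∈ ℤ²` and `h̄ ∈ ℝ²` such that for all `n ∈ ℕ`:
`T^n h = (1/(λ² − 1)) ∑_{i=0}^{2} (λ^{n+i} + λ^{−n−i}) h̄_i + λ^{−n} h̄` in `ℝ²`. -/
theorem statement8 (T : Matrix.SpecialLinearGroup (Fin 2) ℤ) (lam : ℝ) (hlam : 1 < |lam|)
    (heig : ∃ v : Fin 2 → ℝ, v ≠ 0 ∧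
      ((T : Matrix (Fin 2) (Fin 2) ℤ).map (Int.cast : ℤ → ℝ)).mulVec v = lam • v) :
    ∀ h : Fin 2 → ℤ, ∃ hbar : Fin 3 → (Fin 2 → ℤ), ∃ hinf : Fin 2 → ℝ, ∀ n : ℕ,
      (fun j => ((((T : Matrix (Fin 2) (Fin 2) ℤ) ^ n).mulVec h) j : ℝ)) =
        (1 / (lam ^ 2 - 1)) •
            (∑ i : Fin 3, (lam ^ (n + (i : ℕ)) + lam ^ (-(n + (i : ℕ) : ℤ))) •
              (fun j => ((hbar i j : ℤ) : ℝ)))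
          + lam ^ (-(n : ℤ)) • hinf := by
  obtain ⟨v, hv0, hEv⟩ := heig
  intro h
  set A : Matrix (Fin 2) (Fin 2) ℤ := (T : Matrix (Fin 2) (Fin 2) ℤ) with hA
  have hdet : A 0 0 * A 1 1 - A 0 1 * A 1 0 = 1 := by
    have hd := T.2
    rw [Matrix.det_fin_two] at hd
    exact hd
  have hlam0 : lam ≠ 0 := by
    intro h0; rw [h0] at hlam; simp at hlam; linarith
  have hsq : 1 < lam ^ 2 := by nlinarith [sq_abs lam, abs_nonneg lam]
  have hlam2 : lam ^ 2 - 1 ≠ 0 := by intro h0; nlinarith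
  set t : ℤ := A 0 0 + A 1 1 with ht
  have hdetR : ((A 0 0 : ℤ) : ℝ) * ((A 1 1 : ℤ) : ℝ) - ((A 0 1 : ℤ) : ℝ) * ((A 1 0 : ℤ) : ℝ) = 1 := by
    exact_mod_cast hdet
  have e0 := congrFun hEv 0
  have e1 := congrFun hEv 1
  simp [Matrix.mulVec, dotProduct, Fin.sum_univ_two, Matrix.map_apply] at e0 e1
  have hchar : lam ^ 2 + 1 = (t : ℝ) * lam := by
    have k0 : (lam ^ 2 + 1 - (((A 0 0 : ℤ):ℝ) + ((A 1 1 : ℤ):ℝ)) * lam) * v 0 = 0 := by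
      linear_combination (((A 1 1 : ℤ):ℝ) - lam) * e0 - ((A 0 1 : ℤ):ℝ) * e1 - v 0 * hdetR
    have k1 : (lam ^ 2 + 1 - (((A 0 0 : ℤ):ℝ) + ((A 1 1 : ℤ):ℝ)) * lam) * v 1 = 0 := by
      linear_combination (((A 0 0 : ℤ):ℝ) - lam) * e1 - ((A 1 0 : ℤ):ℝ) * e0 - v 1 * hdetR
    obtain ⟨j, hj⟩ := Function.ne_iff.mp hv0
    have ht' : ((t : ℤ) : ℝ) = ((A 0 0 : ℤ):ℝ) + ((A 1 1 : ℤ):ℝ) := by push_cast [ht]; ring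
    rw [ht']
    fin_cases j <;> simp at hj
    · rcases mul_eq_zero.mp k0 with h' | h'
      · linarith
      · exact absurd h' hj
    · rcases mul_eq_zero.mp k1 with h' | h'
      · linarith
      · exact absurd h' hj
  -- Cayley-Hamilton for A
  have hCH : A * A = t • A - 1 := by
    ext i j
    fin_cases i <;> fin_cases j <;>
      simp only [Matrix.mul_apply, Fin.sum_univ_two, Matrix.sub_apply, Matrix.smul_apply,
        Matrix.one_apply, smul_eq_mul, ht, Fin.isValue] <;>
      norm_num <;> linarith [hdet]
  -- recurrence for powers
  have hrec : ∀ m : ℕ, (A ^ (m + 2)).mulVec h = t • (A ^ (m + 1)).mulVec h - (A ^ m).mulVec h := by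
    intro m
    have : A ^ (m + 2) = t • A ^ (m + 1) - A ^ m := by
      have : A ^ (m + 2) = A ^ m * (A * A) := by rw [pow_add, pow_two]
      rw [this, hCH, Matrix.mul_sub, Matrix.mul_smul, mul_one, ← pow_succ]
    rw [this, Matrix.sub_mulVec, Matrix.smul_mulVec]
  set mu : ℝ := lam⁻¹ with hmu
  have hmul : lam * mu = 1 := mul_inv_cancel₀ hlam0
  have htr : lam + mu = (t : ℝ) := by
    rw [hmu]; field_simp
    linear_combination hchar
  have hL : ∀ k : ℕ, lam ^ (k + 2) = (t : ℝ) * lam ^ (k + 1) - lam ^ k := by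
    intro k; linear_combination lam ^ k * hchar
  have hmu2 : mu ^ 2 = (t : ℝ) * mu - 1 := by
    linear_combination mu * htr - hmul
  have hM : ∀ k : ℕ, mu ^ (k + 2) = (t : ℝ) * mu ^ (k + 1) - mu ^ k := by
    intro k; linear_combination mu ^ k * hmu2
  refine ⟨![fun j => -(h j), A.mulVec h, 0],
    fun j => ((1 + lam ^ 2) * (h j : ℝ) - (t : ℝ) * ((A.mulVec h j : ℤ) : ℝ)) / (lam ^ 2 - 1), ?_⟩
  intro n
  funext j
  have hrj : ∀ m : ℕ, (((A ^ (m + 2)).mulVec h j : ℤ) : ℝ) =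
      (t : ℝ) * (((A ^ (m + 1)).mulVec h j : ℤ) : ℝ) - (((A ^ m).mulVec h j : ℤ) : ℝ) := by
    intro m
    have := congrFun (hrec m) j
    simp only [Pi.sub_apply, Pi.smul_apply, smul_eq_mul] at this
    exact_mod_cast this
  have key : ∀ m : ℕ, (lam ^ 2 - 1) * (((A ^ m).mulVec h j : ℤ) : ℝ) =
      ((lam ^ m + mu ^ m) * (-(h j : ℝ)) +
        (lam ^ (m + 1) + mu ^ (m + 1)) * ((A.mulVec h j : ℤ) : ℝ)) +
      mu ^ m * ((1 + lam ^ 2) * (h j : ℝ) - (t : ℝ) * ((A.mulVec h j : ℤ) : ℝ)) := by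
    intro m
    induction m using Nat.twoStepInduction with
    | zero =>
      simp only [pow_zero, pow_one, Matrix.one_mulVec]
      linear_combination (-((A.mulVec h j : ℤ) : ℝ)) * htr
    | one =>
      simp only [pow_one]
      linear_combination (-lam * (h j : ℝ) + ((A.mulVec h j : ℤ) : ℝ)) * hmul
        - ((A.mulVec h j : ℤ) : ℝ) * mu * htr
    | more m ih1 ih2 =>
      linear_combination (lam ^ 2 - 1) * hrj m + (t : ℝ) * ih2 - ih1
        + (h j : ℝ) * (hL m + hM m)
        - ((A.mulVec h j : ℤ) : ℝ) * (hL (m + 1) + hM (m + 1))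
        - ((1 + lam ^ 2) * (h j : ℝ) - (t : ℝ) * ((A.mulVec h j : ℤ) : ℝ)) * hM m
  simp only [Fin.sum_univ_three, Pi.add_apply, Pi.smul_apply, Finset.sum_apply,
    Matrix.cons_val_zero, Matrix.cons_val_one, Matrix.head_cons, smul_eq_mul,
    Matrix.cons_val_two, Matrix.tail_cons, Pi.zero_apply, Int.cast_zero, Int.cast_neg,
    zpow_neg, zpow_natCast]
  norm_num
  have hip : ∀ k : ℕ, (lam ^ k)⁻¹ = mu ^ k := by intro k; rw [hmu, inv_pow]
  rw [show ((n:ℤ)+1) = ((n+1:ℕ):ℤ) by push_cast; ring, zpow_natCast]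
  rw [hip n, hip (n + 1)]
  field_simp
  have hk := key n
  norm_num at hk
  linear_combination hk
end

section
/- Let T ∈ SL₂(ℤ) and let λ ∈ ℝ with |λ| > 1 be an eigenvalue of T. Let θ ∈ ℝ with θ = 2aλ² + 2b for some integers a, b. Then for every h ∈ ℤ² there exists h̄ ∈ ℝ² such that for all g ∈ ℤ² and all n ∈ ℕ there is an integer m with θ σ(g, T^n h) = λ^{−n} · 2a(λ² − 1) · σ(g, h̄) + 2m, where σ(g, x) = g₁x₂ − g₂x₁ denotes the standard symplectic form (extended to x ∈ ℝ²). -/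
/-- Let `T ∈ SL₂(ℤ)`, `λ ∈ ℝ` with `|λ| > 1` an eigenvalue of `T`, and
`θ = 2aλ² + 2b` with `a, b ∈ ℤ`. Then for every `h ∈ ℤ²` there exists `h̄ ∈ ℝ²` such that
for all `g ∈ ℤ²` and `n ∈ ℕ` there is `m ∈ ℤ` with
`θ σ(g, T^n h) = λ^{−n} · 2a(λ² − 1) · σ(g, h̄) + 2m`, where `σ(g, x) = g₁x₂ − g₂x₁`. -/
theorem statement9 (T : Matrix.SpecialLinearGroup (Fin 2) ℤ) (lam : ℝ) (hlam : 1 < |lam|)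
    (heig : ∃ v : Fin 2 → ℝ, v ≠ 0 ∧
      ((T : Matrix (Fin 2) (Fin 2) ℤ).map (Int.cast : ℤ → ℝ)).mulVec v = lam • v)
    (θ : ℝ) (a b : ℤ) (hθ : θ = 2 * (a : ℝ) * lam ^ 2 + 2 * (b : ℝ)) :
    ∀ h : Fin 2 → ℤ, ∃ hbar : Fin 2 → ℝ, ∀ g : Fin 2 → ℤ, ∀ n : ℕ, ∃ m : ℤ,
      θ * ((g 0 * (((T : Matrix (Fin 2) (Fin 2) ℤ) ^ n).mulVec h) 1
            - g 1 * (((T : Matrix (Fin 2) (Fin 2) ℤ) ^ n).mulVec h) 0 : ℤ) : ℝ) =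
        lam ^ (-(n : ℤ)) * (2 * (a : ℝ) * (lam ^ 2 - 1)) *
            ((g 0 : ℝ) * hbar 1 - (g 1 : ℝ) * hbar 0)
          + 2 * (m : ℝ) := by
  intro h
  set M : Matrix (Fin 2) (Fin 2) ℤ := (T : Matrix (Fin 2) (Fin 2) ℤ) with hM
  have hdet : M 0 0 * M 1 1 - M 0 1 * M 1 0 = 1 := by
    have := T.property
    rwa [Matrix.det_fin_two] at this
  set t : ℤ := M 0 0 + M 1 1 with ht
  set A : Matrix (Fin 2) (Fin 2) ℝ := M.map (Int.cast : ℤ → ℝ) with hA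
  have hdetR : (M 0 0 : ℝ) * (M 1 1 : ℝ) - (M 0 1 : ℝ) * (M 1 0 : ℝ) = 1 := by
    exact_mod_cast congrArg (Int.cast : ℤ → ℝ) hdet
  have hACH : A * A + 1 = (t : ℝ) • A := by
    ext i j
    fin_cases i <;> fin_cases j <;>
      simp [hA, Matrix.mul_apply, Fin.sum_univ_two, Matrix.map_apply, Matrix.one_apply, ht] <;>
      push_cast <;> linarith [hdetR]
  -- eigenvalue relation
  have hlam0 : lam ≠ 0 := by
    intro h0; rw [h0, abs_zero] at hlam; linarith
  have hquad : lam ^ 2 - (t : ℝ) * lam + 1 = 0 := by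
    obtain ⟨v, hv0, hv⟩ := heig
    obtain ⟨i, hi⟩ := Function.ne_iff.mp hv0
    have h1 : (A * A + 1).mulVec v = ((t : ℝ) • A).mulVec v := by rw [hACH]
    rw [Matrix.add_mulVec, Matrix.one_mulVec, ← Matrix.mulVec_mulVec, hv,
      Matrix.mulVec_smul, hv, Matrix.smul_mulVec, hv] at h1
    have h2 := congrFun h1 i
    simp only [Pi.add_apply, Pi.smul_apply, smul_eq_mul] at h2
    have : (lam ^ 2 - (t : ℝ) * lam + 1) * v i = 0 := by linear_combination h2
    rcases mul_eq_zero.mp this with h' | h'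
    · exact h'
    · exact absurd h' (by simpa using hi)
  have hD : lam ^ 2 - 1 ≠ 0 := by
    have h1 : 1 < lam ^ 2 := by nlinarith [sq_abs lam, abs_nonneg lam]
    intro h0; linarith
  -- the real orbit
  set hc : Fin 2 → ℝ := fun i => (h i : ℝ) with hhc
  set w : ℕ → Fin 2 → ℝ := fun n => (A ^ n).mulVec hc with hwdef
  have hw : ∀ n i, w n i = (((M ^ n).mulVec h) i : ℤ) := by
    intro n i
    have hpow : A ^ n = (M ^ n).map (Int.cast : ℤ → ℝ) := by
      have := map_pow ((Int.castRingHom ℝ).mapMatrix) M n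
      simpa [RingHom.mapMatrix_apply, hA] using this.symm
    rw [hwdef]
    simp [hpow, Matrix.mulVec, dotProduct, Fin.sum_univ_two, Matrix.map_apply, hhc]
  have hw0 : ∀ i, w 0 i = hc i := by
    intro i; simp [hwdef, Matrix.one_mulVec]; fin_cases i <;> rfl
  have wrec : ∀ n i, w (n + 2) i + w n i = (t : ℝ) * w (n + 1) i := by
    intro n i
    have e1 : A ^ (n + 2) = (A * A) * A ^ n := by
      rw [pow_succ', pow_succ', ← mul_assoc]
    have e2 : A ^ (n + 1) = A * A ^ n := pow_succ' A n
    have h1 : (A * A + 1).mulVec (w n) = ((t : ℝ) • A).mulVec (w n) := by rw [hACH]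
    rw [Matrix.add_mulVec, Matrix.one_mulVec, Matrix.smul_mulVec] at h1
    have h2 := congrFun h1 i
    simp only [Pi.add_apply, Pi.smul_apply, smul_eq_mul] at h2
    have e3 : (A * A).mulVec (w n) = w (n + 2) := by
      simp only [hwdef, Matrix.mulVec_mulVec, ← e1]
    have e4 : A.mulVec (w n) = w (n + 1) := by
      simp only [hwdef, Matrix.mulVec_mulVec, ← e2]
    rw [e3, e4] at h2
    exact h2
  have key : ∀ n i, lam ^ n * (lam * w n i - w (n + 1) i) = lam * hc i - w 1 i := by
    intro n
    induction n with
    | zero => intro i; rw [hw0]; ring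
    | succ n ih =>
        intro i
        have hr := wrec n i
        have hih := ih i
        calc lam ^ (n + 1) * (lam * w (n + 1) i - w (n + 2) i)
            = lam ^ n * (lam * w n i - w (n + 1) i) := by
              linear_combination (- lam ^ (n + 1)) * hr + lam ^ n * w (n + 1) i * hquad
          _ = lam * hc i - w 1 i := hih
  refine ⟨fun i => (t : ℝ) / (lam ^ 2 - 1) * (lam * hc i - w 1 i), ?_⟩
  intro g n
  refine ⟨a * (g 0 * ((M ^ (n + 2)).mulVec h) 1 - g 1 * ((M ^ (n + 2)).mulVec h) 0)
        + b * (g 0 * ((M ^ n).mulVec h) 1 - g 1 * ((M ^ n).mulVec h) 0), ?_⟩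
  -- pass to real sequences
  have hSn : ((g 0 * ((M ^ n).mulVec h) 1 - g 1 * ((M ^ n).mulVec h) 0 : ℤ) : ℝ)
      = (g 0 : ℝ) * w n 1 - (g 1 : ℝ) * w n 0 := by
    rw [hw n 0, hw n 1]; push_cast; ring
  have hS2 : ((g 0 * ((M ^ (n + 2)).mulVec h) 1 - g 1 * ((M ^ (n + 2)).mulVec h) 0 : ℤ) : ℝ)
      = (g 0 : ℝ) * w (n + 2) 1 - (g 1 : ℝ) * w (n + 2) 0 := by
    rw [hw (n + 2) 0, hw (n + 2) 1]; push_cast; ring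
  set σ0 : ℝ := (g 0 : ℝ) * (lam * hc 1 - w 1 1) - (g 1 : ℝ) * (lam * hc 0 - w 1 0) with hσ0
  have K1 : lam ^ n * (lam * ((g 0 : ℝ) * w n 1 - (g 1 : ℝ) * w n 0)
      - ((g 0 : ℝ) * w (n + 1) 1 - (g 1 : ℝ) * w (n + 1) 0)) = σ0 := by
    rw [hσ0]; linear_combination (g 0 : ℝ) * key n 1 - (g 1 : ℝ) * key n 0
  have K2 : lam ^ (n + 1) * (lam * ((g 0 : ℝ) * w (n + 1) 1 - (g 1 : ℝ) * w (n + 1) 0)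
      - ((g 0 : ℝ) * w (n + 2) 1 - (g 1 : ℝ) * w (n + 2) 0)) = σ0 := by
    rw [hσ0]; linear_combination (g 0 : ℝ) * key (n + 1) 1 - (g 1 : ℝ) * key (n + 1) 0
  have mainN : lam ^ n * (lam ^ 2 * ((g 0 : ℝ) * w n 1 - (g 1 : ℝ) * w n 0)
      - ((g 0 : ℝ) * w (n + 2) 1 - (g 1 : ℝ) * w (n + 2) 0)) * lam = (t : ℝ) * σ0 * lam := by
    linear_combination lam ^ 2 * K1 + K2 + σ0 * hquad
  have hne : lam ^ n ≠ 0 := pow_ne_zero _ hlam0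
  have main2 : (lam ^ 2 * ((g 0 : ℝ) * w n 1 - (g 1 : ℝ) * w n 0)
      - ((g 0 : ℝ) * w (n + 2) 1 - (g 1 : ℝ) * w (n + 2) 0)) * lam ^ n
      = (t : ℝ) * ((g 0 : ℝ) * (lam * hc 1 - w 1 1) - (g 1 : ℝ) * (lam * hc 0 - w 1 0)) := by
    apply mul_right_cancel₀ hlam0
    rw [hσ0] at mainN
    linear_combination mainN
  have hfin : (lam ^ n)⁻¹ * (2 * (a : ℝ) * (lam ^ 2 - 1)) *
      ((g 0 : ℝ) * ((t : ℝ) / (lam ^ 2 - 1) * (lam * hc 1 - w 1 1))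
        - (g 1 : ℝ) * ((t : ℝ) / (lam ^ 2 - 1) * (lam * hc 0 - w 1 0)))
      = 2 * (a : ℝ) * (lam ^ 2 * ((g 0 : ℝ) * w n 1 - (g 1 : ℝ) * w n 0)
        - ((g 0 : ℝ) * w (n + 2) 1 - (g 1 : ℝ) * w (n + 2) 0)) := by
    have hinv : (lam ^ n)⁻¹ * lam ^ n = 1 := inv_mul_cancel₀ hne
    have hdiv : (lam ^ 2 - 1) * ((t : ℝ) / (lam ^ 2 - 1)) = t := mul_div_cancel₀ _ hD
    linear_combination ((lam ^ n)⁻¹ * 2 * (a : ℝ) * ((g 0 : ℝ) * (lam * hc 1 - w 1 1) - (g 1 : ℝ) * (lam * hc 0 - w 1 0))) * hdiv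
      - ((lam ^ n)⁻¹ * 2 * (a : ℝ)) * main2
      + (2 * (a : ℝ) * (lam ^ 2 * ((g 0 : ℝ) * w n 1 - (g 1 : ℝ) * w n 0)
        - ((g 0 : ℝ) * w (n + 2) 1 - (g 1 : ℝ) * w (n + 2) 0))) * hinv
  rw [zpow_neg, zpow_natCast, hθ]
  push_cast
  rw [← hw n 0, ← hw n 1, ← hw (n + 2) 0, ← hw (n + 2) 1]
  linear_combination -hfin
end

section
/- Let T ∈ SL₂(ℤ) with a real eigenvalue λ satisfying |λ| > 1, and let θ ∈ ℝ with θ = 2aλ² + 2b for some integers a, b. Define ω_θ(g, h) = exp(iπθσ(g, h)) for g, h ∈ ℤ², where σ(g, h) = g₁h₂ − g₂h₁. Then for all g, h ∈ ℤ² there exists a constant C > 0 such that |1 − ω_θ(g, T^n h)| ≤ C |λ|^{−|n|} for all n ∈ ℤ. -/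
open Complex

private lemma statement10_abs_zpow (x : ℝ) (n : ℤ) : |x ^ n| = |x| ^ n := by
  rcases n with p | p
  · simpa using abs_pow x p
  · simp [zpow_negSucc, abs_pow, abs_inv]

private lemma statement10_exp_bound (x : ℝ) : ‖1 - Complex.exp (x * I)‖ ≤ 2 * |x| := by
  rcases le_or_gt |x| 1 with hx | hx
  · have h1 : ‖(x : ℂ) * I‖ ≤ 1 := by
      simpa using hx
    have h2 := Complex.norm_exp_sub_one_le h1
    rw [norm_sub_rev]
    simpa using h2
  · calc ‖1 - Complex.exp ((x:ℂ)*I)‖ ≤ ‖(1:ℂ)‖ + ‖Complex.exp ((x:ℂ)*I)‖ := norm_sub_le _ _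
      _ = 2 := by rw [Complex.norm_exp_ofReal_mul_I]; norm_num
      _ ≤ 2 * |x| := by nlinarith

open Complex in
/-- Let `T ∈ SL₂(ℤ)` with a real eigenvalue `λ`, `|λ| > 1`, and let
`θ = 2aλ² + 2b` with `a, b ∈ ℤ`. With `ω_θ(g, h) = exp(iπθσ(g, h))`,
`σ(g, h) = g₁h₂ − g₂h₁`, for all `g, h ∈ ℤ²` there exists `C > 0` such that
`|1 − ω_θ(g, T^n h)| ≤ C |λ|^{−|n|}` for all `n ∈ ℤ`. -/
theorem statement10 (T : Matrix.SpecialLinearGroup (Fin 2) ℤ) (lam : ℝ) (hlam : 1 < |lam|)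
    (heig : ∃ v : Fin 2 → ℝ, v ≠ 0 ∧
      ((T : Matrix (Fin 2) (Fin 2) ℤ).map (Int.cast : ℤ → ℝ)).mulVec v = lam • v)
    (θ : ℝ) (a b : ℤ) (hθ : θ = 2 * (a : ℝ) * lam ^ 2 + 2 * (b : ℝ)) :
    ∀ g h : Fin 2 → ℤ, ∃ C : ℝ, 0 < C ∧ ∀ n : ℤ,
      ‖1 - Complex.exp (Complex.I * Real.pi * θ *
          ((g 0 * (((T ^ n : Matrix.SpecialLinearGroup (Fin 2) ℤ) :
              Matrix (Fin 2) (Fin 2) ℤ).mulVec h) 1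
            - g 1 * (((T ^ n : Matrix.SpecialLinearGroup (Fin 2) ℤ) :
              Matrix (Fin 2) (Fin 2) ℤ).mulVec h) 0 : ℤ) : ℂ))‖
        ≤ C * |lam| ^ (-(|n| : ℤ)) := by
  obtain ⟨v, hv0, hMv⟩ := heig
  have hlampos : (0:ℝ) < |lam| := by linarith
  have hlam0 : lam ≠ 0 := fun h0 => by rw [h0, abs_zero] at hlam; linarith
  set t : ℤ := (T : Matrix (Fin 2) (Fin 2) ℤ) 0 0 + (T : Matrix (Fin 2) (Fin 2) ℤ) 1 1 with ht
  -- determinant one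
  have hdet1 : ((T : Matrix (Fin 2) (Fin 2) ℤ) 0 0 * (T : Matrix (Fin 2) (Fin 2) ℤ) 1 1
      - (T : Matrix (Fin 2) (Fin 2) ℤ) 0 1 * (T : Matrix (Fin 2) (Fin 2) ℤ) 1 0 : ℤ) = 1 := by
    have := T.property
    rwa [Matrix.det_fin_two] at this
  -- characteristic equation
  have hchar : lam ^ 2 - (t : ℝ) * lam + 1 = 0 := by
    set Mr : Matrix (Fin 2) (Fin 2) ℝ := (T : Matrix (Fin 2) (Fin 2) ℤ).map (Int.cast : ℤ → ℝ)
      with hMr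
    have hker : (Mr - lam • 1).mulVec v = 0 := by
      rw [Matrix.sub_mulVec, hMv, Matrix.smul_mulVec, Matrix.one_mulVec, sub_self]
    have hdet0 : (Mr - lam • 1).det = 0 := Matrix.exists_mulVec_eq_zero_iff.mp ⟨v, hv0, hker⟩
    rw [Matrix.det_fin_two] at hdet0
    simp only [Matrix.sub_apply, Matrix.smul_apply, Matrix.one_apply, hMr,
      Matrix.map_apply] at hdet0
    have hd : ((T : Matrix (Fin 2) (Fin 2) ℤ) 0 0 * (T : Matrix (Fin 2) (Fin 2) ℤ) 1 1
        - (T : Matrix (Fin 2) (Fin 2) ℤ) 0 1 * (T : Matrix (Fin 2) (Fin 2) ℤ) 1 0 : ℝ) = 1 := by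
      exact_mod_cast hdet1
    have htr : (t:ℝ) = ((T : Matrix (Fin 2) (Fin 2) ℤ) 0 0 : ℝ)
        + ((T : Matrix (Fin 2) (Fin 2) ℤ) 1 1 : ℝ) := by rw [ht]; push_cast; ring
    push_cast
    push_cast at hdet0
    norm_num at hdet0
    linear_combination hdet0 - hd - lam * htr
  -- Cayley–Hamilton
  have hCH : (T : Matrix (Fin 2) (Fin 2) ℤ) * (T : Matrix (Fin 2) (Fin 2) ℤ) + 1
      = t • (T : Matrix (Fin 2) (Fin 2) ℤ) := by
    ext i j
    fin_cases i <;> fin_cases j <;>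
      simp [Matrix.mul_apply, Fin.sum_univ_two, Matrix.one_apply, ht] <;>
      first | ring1 | (linear_combination (-hdet1)) | (linear_combination hdet1)
  -- matrix recurrence
  have hA : ∀ n : ℤ, ((T ^ (n+1) : Matrix.SpecialLinearGroup (Fin 2) ℤ) : Matrix (Fin 2) (Fin 2) ℤ)
      = t • ((T ^ n : Matrix.SpecialLinearGroup (Fin 2) ℤ) : Matrix (Fin 2) (Fin 2) ℤ)
        - ((T ^ (n-1) : Matrix.SpecialLinearGroup (Fin 2) ℤ) : Matrix (Fin 2) (Fin 2) ℤ) := by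
    intro n
    have h1 : T ^ (n+1) = T ^ (n-1) * (T * T) := by
      rw [show n+1 = n-1+2 by ring, zpow_add, zpow_two]
    have h2 : T ^ n = T ^ (n-1) * T := by
      rw [show n = n-1+1 by ring, zpow_add, zpow_one, show n-1+1-1 = n-1 by ring]
    rw [h1, h2]
    simp only [Matrix.SpecialLinearGroup.coe_mul]
    rw [eq_sub_of_add_eq hCH, Matrix.mul_sub, Matrix.mul_smul, Matrix.mul_one]
  intro g h
  set m : ℤ → ℤ := fun n => g 0 * (((T ^ n : Matrix.SpecialLinearGroup (Fin 2) ℤ) :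
      Matrix (Fin 2) (Fin 2) ℤ).mulVec h) 1
    - g 1 * (((T ^ n : Matrix.SpecialLinearGroup (Fin 2) ℤ) :
      Matrix (Fin 2) (Fin 2) ℤ).mulVec h) 0 with hm
  -- scalar recurrence
  have hmrec : ∀ n : ℤ, ((m (n+1) : ℤ) : ℝ) = t * m n - m (n-1) := by
    intro n
    have : m (n+1) = t * m n - m (n-1) := by
      simp only [hm, hA n, Matrix.sub_mulVec, Matrix.smul_mulVec,
        Pi.sub_apply, Pi.smul_apply, smul_eq_mul]
      ring
    exact_mod_cast this
  set r : ℤ → ℝ := fun n => lam * m n - m (n+1) with hr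
  set s : ℤ → ℝ := fun n => lam * m n - m (n-1) with hs
  have hrstep : ∀ n : ℤ, lam * r (n+1) = r n := by
    intro n
    have e := hmrec (n+1)
    rw [show n+1+1 = n+2 by ring, show n+1-1 = n by ring] at e
    simp only [hr]
    rw [show n+1+1 = n+2 by ring]
    linear_combination ((m (n+1) : ℤ) : ℝ) * hchar - lam * e
  have hsstep : ∀ n : ℤ, s (n+1) = lam * s n := by
    intro n
    have e := hmrec n
    simp only [hs]
    rw [show n+1-1 = n by ring]
    linear_combination (-((m n : ℤ) : ℝ)) * hchar + lam * e
  have hrn : ∀ n : ℤ, lam ^ n * r n = r 0 := by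
    intro n
    induction n using Int.induction_on with
    | zero => simp
    | succ k ih =>
      rw [zpow_add_one₀ hlam0]
      calc lam ^ (k:ℤ) * lam * r ((k:ℤ)+1) = lam ^ (k:ℤ) * (lam * r ((k:ℤ)+1)) := by ring
        _ = lam ^ (k:ℤ) * r k := by rw [hrstep]
        _ = r 0 := ih
    | pred k ih =>
      have e := hrstep (-(k:ℤ)-1)
      rw [show -(k:ℤ)-1+1 = -(k:ℤ) by ring] at e
      calc lam ^ (-(k:ℤ)-1) * r (-(k:ℤ)-1)
          = lam ^ (-(k:ℤ)-1) * (lam * r (-(k:ℤ))) := by rw [e]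
        _ = lam ^ (-(k:ℤ)) * r (-(k:ℤ)) := by
            rw [show -(k:ℤ)-1 = -(k:ℤ)+(-1) by ring, zpow_add₀ hlam0, zpow_neg_one]
            field_simp
        _ = r 0 := ih
  have hsn : ∀ n : ℤ, lam ^ (-n) * s n = s 0 := by
    intro n
    induction n using Int.induction_on with
    | zero => simp
    | succ k ih =>
      rw [hsstep k, show -((k:ℤ)+1) = -(k:ℤ) + (-1) by ring, zpow_add₀ hlam0, zpow_neg_one]
      calc lam ^ (-(k:ℤ)) * lam⁻¹ * (lam * s k)
          = lam ^ (-(k:ℤ)) * s k * (lam⁻¹ * lam) := by ring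
        _ = lam ^ (-(k:ℤ)) * s k := by rw [inv_mul_cancel₀ hlam0, mul_one]
        _ = s 0 := ih
    | pred k ih =>
      have e := hsstep (-(k:ℤ)-1)
      rw [show -(k:ℤ)-1+1 = -(k:ℤ) by ring] at e
      calc lam ^ (-(-(k:ℤ)-1)) * s (-(k:ℤ)-1)
          = lam ^ (-(-(k:ℤ))) * (lam * s (-(k:ℤ)-1)) := by
            rw [show -(-(k:ℤ)-1) = -(-(k:ℤ)) + 1 by ring, zpow_add_one₀ hlam0]; ring
        _ = lam ^ (-(-(k:ℤ))) * s (-(k:ℤ)) := by rw [e]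
        _ = s 0 := ih
  -- key identities
  have key1 : ∀ n : ℤ, lam ^ 2 * ((m n : ℤ) : ℝ) = ((m (n+2) : ℤ) : ℝ) + t * r n := by
    intro n
    have e := hmrec (n+1)
    rw [show n+1+1 = n+2 by ring, show n+1-1 = n by ring] at e
    simp only [hr]
    linear_combination ((m n : ℤ) : ℝ) * hchar - e
  have key2 : ∀ n : ℤ, lam ^ 2 * ((m n : ℤ) : ℝ) = ((m (n-2) : ℤ) : ℝ) + t * s n := by
    intro n
    have e := hmrec (n-1)
    rw [show n-1+1 = n by ring, show n-1-1 = n-2 by ring] at e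
    simp only [hs]
    linear_combination ((m n : ℤ) : ℝ) * hchar - e
  refine ⟨2 * (2 * Real.pi * (|(a:ℝ)| * |(t:ℝ)|) * (|r 0| + |s 0|)) + 1, by positivity, ?_⟩
  intro n
  have hzpos : (0:ℝ) < |lam| ^ (-(|n| : ℤ)) := zpow_pos hlampos _
  rcases le_total 0 n with hn | hn
  · -- n ≥ 0 : use r
    have habsn : |n| = n := abs_of_nonneg hn
    have hreal : θ * ((m n : ℤ) : ℝ)
        = 2 * ((a * m (n+2) + b * m n : ℤ) : ℝ) + 2 * ((a:ℝ) * ((t:ℝ) * r n)) := by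
      push_cast
      rw [hθ]
      linear_combination (2 * (a:ℝ)) * key1 n
    have hexp : Complex.I * (Real.pi : ℂ) * (θ : ℂ) * ((m n : ℤ) : ℂ)
        = ((a * m (n+2) + b * m n : ℤ) : ℂ) * (2 * (Real.pi : ℂ) * Complex.I)
          + ((2 * Real.pi * ((a:ℝ) * ((t:ℝ) * r n)) : ℝ) : ℂ) * Complex.I := by
      have hc : ((θ * ((m n : ℤ) : ℝ) : ℝ) : ℂ)
          = ((2 * ((a * m (n+2) + b * m n : ℤ) : ℝ) + 2 * ((a:ℝ) * ((t:ℝ) * r n)) : ℝ) : ℂ) := by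
        exact_mod_cast congrArg (fun u : ℝ => (u : ℂ)) hreal
      push_cast at hc ⊢
      linear_combination (Real.pi : ℂ) * Complex.I * hc
    have hrabs : |r n| = |r 0| * |lam| ^ (-n) := by
      have e : |lam ^ n| * |r n| = |r 0| := by rw [← abs_mul, hrn n]
      rw [statement10_abs_zpow] at e
      have hP : (0:ℝ) < |lam| ^ n := zpow_pos hlampos n
      rw [zpow_neg, ← div_eq_mul_inv, eq_div_iff (ne_of_gt hP)]
      linarith [e]
    calc ‖1 - Complex.exp (Complex.I * (Real.pi:ℂ) * (θ:ℂ) * ((m n : ℤ) : ℂ))‖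
        = ‖1 - Complex.exp (((2 * Real.pi * ((a:ℝ) * ((t:ℝ) * r n)) : ℝ) : ℂ) * Complex.I)‖ := by
          rw [hexp, Complex.exp_add, Complex.exp_int_mul_two_pi_mul_I, one_mul]
      _ ≤ 2 * |2 * Real.pi * ((a:ℝ) * ((t:ℝ) * r n))| := statement10_exp_bound _
      _ ≤ (2 * (2 * Real.pi * (|(a:ℝ)| * |(t:ℝ)|) * (|r 0| + |s 0|)) + 1) * |lam| ^ (-(|n| : ℤ)) := by
          have hx : |2 * Real.pi * ((a:ℝ) * ((t:ℝ) * r n))|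
              = 2 * Real.pi * (|(a:ℝ)| * (|(t:ℝ)| * (|r 0| * |lam| ^ (-n)))) := by
            simp only [abs_mul, hrabs, abs_of_pos Real.pi_pos, _root_.abs_two]
          rw [hx, habsn]
          have A1 : (0:ℝ) ≤ 2 * Real.pi * (|(a:ℝ)| * |(t:ℝ)|) * (|s 0| * |lam| ^ (-n)) := by
            positivity
          have A2 : (0:ℝ) < |lam| ^ (-n) := zpow_pos hlampos _
          nlinarith [A1, A2]
  · -- n ≤ 0 : use s
    have habsn : |n| = -n := abs_of_nonpos hn
    have hreal : θ * ((m n : ℤ) : ℝ)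
        = 2 * ((a * m (n-2) + b * m n : ℤ) : ℝ) + 2 * ((a:ℝ) * ((t:ℝ) * s n)) := by
      push_cast
      rw [hθ]
      linear_combination (2 * (a:ℝ)) * key2 n
    have hexp : Complex.I * (Real.pi : ℂ) * (θ : ℂ) * ((m n : ℤ) : ℂ)
        = ((a * m (n-2) + b * m n : ℤ) : ℂ) * (2 * (Real.pi : ℂ) * Complex.I)
          + ((2 * Real.pi * ((a:ℝ) * ((t:ℝ) * s n)) : ℝ) : ℂ) * Complex.I := by
      have hc : ((θ * ((m n : ℤ) : ℝ) : ℝ) : ℂ)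
          = ((2 * ((a * m (n-2) + b * m n : ℤ) : ℝ) + 2 * ((a:ℝ) * ((t:ℝ) * s n)) : ℝ) : ℂ) := by
        exact_mod_cast congrArg (fun u : ℝ => (u : ℂ)) hreal
      push_cast at hc ⊢
      linear_combination (Real.pi : ℂ) * Complex.I * hc
    have hsabs : |s n| = |s 0| * |lam| ^ n := by
      have e : |lam ^ (-n)| * |s n| = |s 0| := by rw [← abs_mul, hsn n]
      rw [statement10_abs_zpow] at e
      have hP : (0:ℝ) < |lam| ^ (-n) := zpow_pos hlampos _
      rw [show |lam| ^ n = (|lam| ^ (-n))⁻¹ by rw [← zpow_neg, neg_neg],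
        ← div_eq_mul_inv, eq_div_iff (ne_of_gt hP)]
      linarith [e]
    calc ‖1 - Complex.exp (Complex.I * (Real.pi:ℂ) * (θ:ℂ) * ((m n : ℤ) : ℂ))‖
        = ‖1 - Complex.exp (((2 * Real.pi * ((a:ℝ) * ((t:ℝ) * s n)) : ℝ) : ℂ) * Complex.I)‖ := by
          rw [hexp, Complex.exp_add, Complex.exp_int_mul_two_pi_mul_I, one_mul]
      _ ≤ 2 * |2 * Real.pi * ((a:ℝ) * ((t:ℝ) * s n))| := statement10_exp_bound _
      _ ≤ (2 * (2 * Real.pi * (|(a:ℝ)| * |(t:ℝ)|) * (|r 0| + |s 0|)) + 1) * |lam| ^ (-(|n| : ℤ)) := by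
          have hx : |2 * Real.pi * ((a:ℝ) * ((t:ℝ) * s n))|
              = 2 * Real.pi * (|(a:ℝ)| * (|(t:ℝ)| * (|s 0| * |lam| ^ n))) := by
            simp only [abs_mul, hsabs, abs_of_pos Real.pi_pos, _root_.abs_two]
          rw [habsn, neg_neg]
          rw [hx]
          have A1 : (0:ℝ) ≤ 2 * Real.pi * (|(a:ℝ)| * |(t:ℝ)|) * (|r 0| * |lam| ^ n) := by
            positivity
          have A2 : (0:ℝ) < |lam| ^ n := zpow_pos hlampos _
          nlinarith [A1, A2]
end

section
/- Let T ∈ SL₂(ℤ) with a real eigenvalue λ satisfying |λ| > 1, and let θ ∈ ℝ with θ = 2aλ² + 2b for some integers a, b. Define ω_θ(g, h) = exp(iπθσ(g, h)) for g, h ∈ ℤ², where σ(g, h) = g₁h₂ − g₂h₁. Then for all g, h ∈ ℤ², the family (|1 − ω_θ(g, T^n h)|)_{n ∈ ℤ} is summable: ∑_{n∈ℤ} |1 − ω_θ(g, T^n h)| < ∞. -/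
private lemma aux_quad (T : Matrix.SpecialLinearGroup (Fin 2) ℤ) (lam : ℝ)
    (heig : ∃ v : Fin 2 → ℝ, v ≠ 0 ∧
      ((T : Matrix (Fin 2) (Fin 2) ℤ).map (Int.cast : ℤ → ℝ)).mulVec v = lam • v) :
    lam * lam - ((T : Matrix (Fin 2) (Fin 2) ℤ) 0 0 + (T : Matrix (Fin 2) (Fin 2) ℤ) 1 1 : ℤ) * lam + 1 = 0 := by
  obtain ⟨v, hv0, hv⟩ := heig
  set M := (T : Matrix (Fin 2) (Fin 2) ℤ).map (Int.cast : ℤ → ℝ) with hM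
  have hdet0 : (M - lam • 1).det = 0 := by
    rw [← Matrix.exists_mulVec_eq_zero_iff]
    exact ⟨v, hv0, by rw [Matrix.sub_mulVec, Matrix.smul_mulVec, Matrix.one_mulVec, hv, sub_self]⟩
  have hdetT : ((T : Matrix (Fin 2) (Fin 2) ℤ) 0 0) * ((T : Matrix (Fin 2) (Fin 2) ℤ) 1 1)
      - ((T : Matrix (Fin 2) (Fin 2) ℤ) 0 1) * ((T : Matrix (Fin 2) (Fin 2) ℤ) 1 0) = 1 := by
    have := T.2
    rwa [Matrix.det_fin_two] at this
  rw [Matrix.det_fin_two] at hdet0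
  simp only [Matrix.sub_apply, Matrix.smul_apply, Matrix.one_apply, Matrix.map_apply, hM,
    smul_eq_mul] at hdet0
  have : ((((T : Matrix (Fin 2) (Fin 2) ℤ) 0 0) * ((T : Matrix (Fin 2) (Fin 2) ℤ) 1 1)
      - ((T : Matrix (Fin 2) (Fin 2) ℤ) 0 1) * ((T : Matrix (Fin 2) (Fin 2) ℤ) 1 0) : ℤ) : ℝ) = 1 := by
    exact_mod_cast congrArg (Int.cast : ℤ → ℝ) hdetT
  push_cast at this hdet0 ⊢
  norm_num at hdet0
  nlinarith [hdet0, this]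

private lemma aux_CH (T : Matrix.SpecialLinearGroup (Fin 2) ℤ) :
    (T : Matrix (Fin 2) (Fin 2) ℤ) * (T : Matrix (Fin 2) (Fin 2) ℤ)
      = ((T : Matrix (Fin 2) (Fin 2) ℤ) 0 0 + (T : Matrix (Fin 2) (Fin 2) ℤ) 1 1) •
          (T : Matrix (Fin 2) (Fin 2) ℤ) - 1 := by
  have hdetT : ((T : Matrix (Fin 2) (Fin 2) ℤ) 0 0) * ((T : Matrix (Fin 2) (Fin 2) ℤ) 1 1)
      - ((T : Matrix (Fin 2) (Fin 2) ℤ) 0 1) * ((T : Matrix (Fin 2) (Fin 2) ℤ) 1 0) = 1 := by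
    have := T.2; rwa [Matrix.det_fin_two] at this
  ext i j
  fin_cases i <;> fin_cases j <;>
    simp only [Matrix.mul_apply, Fin.sum_univ_two, Matrix.sub_apply, Matrix.smul_apply,
      Matrix.one_apply, smul_eq_mul] <;> norm_num <;> linarith

private lemma aux_abs_zpow (a : ℝ) (n : ℤ) : |a ^ n| = |a| ^ n := by
  rcases n with k | k
  · simpa using abs_pow a k
  · simp [zpow_negSucc, abs_inv, abs_pow]

private lemma aux_exp_norm (y : ℝ) : ‖Complex.exp ((y : ℂ) * Complex.I) - 1‖ ≤ 2 * |y| := by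
  rcases le_or_gt |y| 1 with hy | hy
  · have habs : ‖(y : ℂ) * Complex.I‖ = |y| := by
      rw [norm_mul, Complex.norm_I, mul_one, Complex.norm_real, Real.norm_eq_abs]
    have := Complex.norm_exp_sub_one_le (x := (y : ℂ) * Complex.I) (by rw [habs]; exact hy)
    rw [habs] at this
    simpa using this
  · have h1 : ‖Complex.exp ((y : ℂ) * Complex.I)‖ = 1 := by
      simpa using Complex.norm_exp_ofReal_mul_I y
    calc ‖Complex.exp ((y : ℂ) * Complex.I) - 1‖
        ≤ ‖Complex.exp ((y : ℂ) * Complex.I)‖ + ‖(1 : ℂ)‖ := norm_sub_le _ _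
      _ = 2 := by rw [h1]; norm_num
      _ ≤ 2 * |y| := by nlinarith

/-- Let `T ∈ SL₂(ℤ)` with a real eigenvalue `λ`, `|λ| > 1`, and
`θ = 2aλ² + 2b` with `a, b ∈ ℤ`. With `ω_θ(g, h) = exp(iπθσ(g, h))`,
`σ(g, h) = g₁h₂ − g₂h₁`, for all `g, h ∈ ℤ²` the family `(|1 − ω_θ(g, T^n h)|)_{n ∈ ℤ}`
is summable. -/
theorem statement11 (T : Matrix.SpecialLinearGroup (Fin 2) ℤ) (lam : ℝ) (hlam : 1 < |lam|)
    (heig : ∃ v : Fin 2 → ℝ, v ≠ 0 ∧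
      ((T : Matrix (Fin 2) (Fin 2) ℤ).map (Int.cast : ℤ → ℝ)).mulVec v = lam • v)
    (θ : ℝ) (a b : ℤ) (hθ : θ = 2 * (a : ℝ) * lam ^ 2 + 2 * (b : ℝ)) :
    ∀ g h : Fin 2 → ℤ,
      Summable (fun n : ℤ =>
        ‖1 - Complex.exp (Complex.I * Real.pi * θ *
          ((g 0 * (((T ^ n : Matrix.SpecialLinearGroup (Fin 2) ℤ) :
              Matrix (Fin 2) (Fin 2) ℤ).mulVec h) 1
            - g 1 * (((T ^ n : Matrix.SpecialLinearGroup (Fin 2) ℤ) :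
              Matrix (Fin 2) (Fin 2) ℤ).mulVec h) 0 : ℤ) : ℂ))‖) := by
  intro g h
  have hlam0 : lam ≠ 0 := by
    intro h0; rw [h0, abs_zero] at hlam; linarith
  set t : ℤ := (T : Matrix (Fin 2) (Fin 2) ℤ) 0 0 + (T : Matrix (Fin 2) (Fin 2) ℤ) 1 1 with ht
  have hquad : lam * lam - (t : ℝ) * lam + 1 = 0 := aux_quad T lam heig
  set M : ℤ → Matrix (Fin 2) (Fin 2) ℤ :=
    fun n => ((T ^ n : Matrix.SpecialLinearGroup (Fin 2) ℤ) : Matrix (Fin 2) (Fin 2) ℤ) with hMdef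
  have hM1 : ∀ n : ℤ, M (n + 1) = M n * (T : Matrix (Fin 2) (Fin 2) ℤ) := by
    intro n
    simp only [hMdef, zpow_add_one, Matrix.SpecialLinearGroup.coe_mul, zpow_one]
  have hM2 : ∀ n : ℤ, M (n + 2) = t • M (n + 1) - M n := by
    intro n
    have : M (n + 2) = M (n + 1) * (T : Matrix (Fin 2) (Fin 2) ℤ) := by
      have : n + 2 = (n + 1) + 1 := by ring
      rw [this, hM1]
    rw [this, hM1, mul_assoc, aux_CH T, mul_sub, mul_one, mul_smul_comm]
  set S : ℤ → ℤ := fun n => g 0 * (M n).mulVec h 1 - g 1 * (M n).mulVec h 0 with hSdef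
  have hSrec : ∀ n : ℤ, S (n + 2) = t * S (n + 1) - S n := by
    intro n
    simp only [hSdef, hM2 n, Matrix.sub_mulVec, Matrix.smul_mulVec,
      Pi.sub_apply, Pi.smul_apply, smul_eq_mul]
    ring
  set s : ℤ → ℝ := fun n => (S n : ℝ) with hsdef
  have hsrec : ∀ n : ℤ, s (n + 2) = (t : ℝ) * s (n + 1) - s n := by
    intro n; simp only [hsdef]; exact_mod_cast congrArg (Int.cast : ℤ → ℝ) (hSrec n)
  -- the two decaying sequences
  set e : ℤ → ℝ := fun n => lam * s n - s (n + 1) with hedef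
  set f : ℤ → ℝ := fun n => lam * s n - s (n - 1) with hfdef
  have he : ∀ n : ℤ, e (n + 1) = lam⁻¹ * e n := by
    intro n
    have h2 : s (n + 2) = (t : ℝ) * s (n + 1) - s n := hsrec n
    simp only [hedef]
    have : n + 1 + 1 = n + 2 := by ring
    rw [this, h2]
    field_simp
    linear_combination s (n + 1) * hquad
  have hf : ∀ n : ℤ, f (n + 1) = lam * f n := by
    intro n
    have h2 : s (n - 1 + 2) = (t : ℝ) * s (n - 1 + 1) - s (n - 1) := hsrec (n - 1)
    simp only [hfdef]
    have e1 : n + 1 - 1 = n - 1 + 1 := by ring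
    have e2 : n + 1 = n - 1 + 2 := by ring
    rw [e1, e2, h2, show n - 1 + 1 = n by ring]
    linear_combination (- s n) * hquad
  have heC : ∀ n : ℤ, e n = e 0 * lam ^ (-n) := by
    intro n
    induction n using Int.induction_on with
    | zero => simp
    | succ k ih =>
      rw [he k, ih]
      rw [show (-(k + 1 : ℤ)) = -k + (-1) by ring, zpow_add₀ hlam0, zpow_neg_one]
      ring
    | pred k ih =>
      have h1 := he (-(k:ℤ) - 1)
      rw [show (-(k:ℤ) - 1 + 1) = -(k:ℤ) by ring] at h1
      have h2 : e (-(k:ℤ) - 1) = lam * e (-(k:ℤ)) := by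
        rw [h1]; field_simp
      rw [h2, ih, show (-(-(k:ℤ))) = (k:ℤ) by ring,
        show (-(-(k:ℤ) - 1)) = (k:ℤ) + 1 by ring, zpow_add₀ hlam0, zpow_one]
      ring
  have hfC : ∀ n : ℤ, f n = f 0 * lam ^ n := by
    intro n
    induction n using Int.induction_on with
    | zero => simp
    | succ k ih =>
      rw [hf k, ih, zpow_add₀ hlam0, zpow_one]; ring
    | pred k ih =>
      have h1 := hf (-(k:ℤ) - 1)
      rw [show (-(k:ℤ) - 1 + 1) = -(k:ℤ) by ring] at h1
      have h2 : f (-(k:ℤ) - 1) = lam⁻¹ * f (-(k:ℤ)) := by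
        rw [h1]; field_simp
      rw [h2, ih, show (-(k:ℤ) - 1) = -(k:ℤ) + (-1) by ring, zpow_add₀ hlam0, zpow_neg_one]
      ring
  -- uniform bound
  set r : ℝ := |lam|⁻¹ with hrdef
  have hr0 : 0 ≤ r := by positivity
  have hr1 : r < 1 := by
    rw [hrdef, inv_lt_one_iff₀]; right; exact hlam
  set C : ℝ := (|e 0| + |f 0|) * (|lam| + |lam|⁻¹) with hCdef
  have hC0 : 0 ≤ C := by positivity
  have key : ∀ n : ℤ, ∃ m : ℤ, |lam ^ 2 * s n - (m : ℝ)| ≤ C * r ^ n.natAbs := by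
    intro n
    rcases le_or_gt 0 n with hn | hn
    · refine ⟨S (n + 2), ?_⟩
      have hid : lam ^ 2 * s n - s (n + 2) = lam * e n + e (n + 1) := by
        simp only [hedef]; rw [show n + 1 + 1 = n + 2 by ring]; ring
      have : lam ^ 2 * s n - s (n + 2) = e 0 * lam ^ (-n) * (lam + lam⁻¹) := by
        rw [hid, heC n, heC (n + 1), show (-(n + 1) : ℤ) = -n + (-1) by ring,
          zpow_add₀ hlam0, zpow_neg_one]
        ring
      have habs : |lam ^ 2 * s n - s (n + 2)| ≤ |e 0| * r ^ n.natAbs * (|lam| + |lam|⁻¹) := by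
        rw [this]
        rw [abs_mul, abs_mul]
        have h1 : |lam ^ (-n : ℤ)| = r ^ n.natAbs := by
          rw [aux_abs_zpow, hrdef, show (-n : ℤ) = -((n.natAbs : ℕ) : ℤ) by omega,
            zpow_neg, zpow_natCast, ← inv_pow]
        rw [h1]
        have h2 : |lam + lam⁻¹| ≤ |lam| + |lam|⁻¹ := by
          refine (abs_add_le _ _).trans ?_; rw [abs_inv]
        have hnn : 0 ≤ |e 0| * r ^ n.natAbs := by positivity
        exact mul_le_mul_of_nonneg_left h2 hnn
      calc |lam ^ 2 * s n - ((S (n+2) : ℤ) : ℝ)| = |lam ^ 2 * s n - s (n + 2)| := rfl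
        _ ≤ |e 0| * r ^ n.natAbs * (|lam| + |lam|⁻¹) := habs
        _ ≤ C * r ^ n.natAbs := by
            rw [hCdef]
            have h3 : |e 0| ≤ |e 0| + |f 0| := le_add_of_nonneg_right (abs_nonneg _)
            calc |e 0| * r ^ n.natAbs * (|lam| + |lam|⁻¹)
                = |e 0| * (|lam| + |lam|⁻¹) * r ^ n.natAbs := by ring
              _ ≤ (|e 0| + |f 0|) * (|lam| + |lam|⁻¹) * r ^ n.natAbs :=
                  mul_le_mul_of_nonneg_right
                    (mul_le_mul_of_nonneg_right h3 (by positivity)) (by positivity)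
    · refine ⟨S (n - 2), ?_⟩
      have hid : lam ^ 2 * s n - s (n - 2) = lam * f n + f (n - 1) := by
        simp only [hfdef]; rw [show n - 1 - 1 = n - 2 by ring]; ring
      have : lam ^ 2 * s n - s (n - 2) = f 0 * lam ^ n * (lam + lam⁻¹) := by
        rw [hid, hfC n, hfC (n - 1), show (n - 1 : ℤ) = n + (-1) by ring,
          zpow_add₀ hlam0, zpow_neg_one]
        ring
      have habs : |lam ^ 2 * s n - s (n - 2)| ≤ |f 0| * r ^ n.natAbs * (|lam| + |lam|⁻¹) := by
        rw [this, abs_mul, abs_mul]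
        have h1 : |lam ^ (n : ℤ)| = r ^ n.natAbs := by
          have hn' : (n : ℤ) = -((n.natAbs : ℕ) : ℤ) := by omega
          rw [aux_abs_zpow, hrdef]
          conv_lhs => rw [hn']
          rw [zpow_neg, zpow_natCast, ← inv_pow]
        rw [h1]
        have h2 : |lam + lam⁻¹| ≤ |lam| + |lam|⁻¹ := by
          refine (abs_add_le _ _).trans ?_; rw [abs_inv]
        have hnn : 0 ≤ |f 0| * r ^ n.natAbs := by positivity
        exact mul_le_mul_of_nonneg_left h2 hnn
      calc |lam ^ 2 * s n - ((S (n-2) : ℤ) : ℝ)| = |lam ^ 2 * s n - s (n - 2)| := rfl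
        _ ≤ |f 0| * r ^ n.natAbs * (|lam| + |lam|⁻¹) := habs
        _ ≤ C * r ^ n.natAbs := by
            rw [hCdef]
            have h3 : |f 0| ≤ |e 0| + |f 0| := le_add_of_nonneg_left (abs_nonneg _)
            calc |f 0| * r ^ n.natAbs * (|lam| + |lam|⁻¹)
                = |f 0| * (|lam| + |lam|⁻¹) * r ^ n.natAbs := by ring
              _ ≤ (|e 0| + |f 0|) * (|lam| + |lam|⁻¹) * r ^ n.natAbs :=
                  mul_le_mul_of_nonneg_right
                    (mul_le_mul_of_nonneg_right h3 (by positivity)) (by positivity)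
  -- bound each term
  set K : ℝ := 2 * (2 * Real.pi * |(a : ℝ)|) * C with hKdef
  have hbound : ∀ n : ℤ,
      ‖1 - Complex.exp (Complex.I * Real.pi * θ * ((S n : ℤ) : ℂ))‖ ≤ K * r ^ n.natAbs := by
    intro n
    obtain ⟨m, hm⟩ := key n
    set y : ℝ := 2 * Real.pi * (a : ℝ) * (lam ^ 2 * s n - (m : ℝ)) with hydef
    have hx : Complex.I * Real.pi * θ * ((S n : ℤ) : ℂ)
        = (y : ℂ) * Complex.I + ((a * m + b * S n : ℤ) : ℂ) * (2 * Real.pi * Complex.I) := by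
      rw [hydef, hθ]
      simp only [hsdef]
      push_cast
      ring
    rw [hx, Complex.exp_add, Complex.exp_int_mul_two_pi_mul_I, mul_one]
    rw [norm_sub_rev]
    calc ‖Complex.exp ((y:ℂ) * Complex.I) - 1‖ ≤ 2 * |y| := aux_exp_norm y
      _ ≤ K * r ^ n.natAbs := by
          rw [hKdef, hydef]
          rw [abs_mul]
          have hπ : 0 < Real.pi := Real.pi_pos
          have h1 : |2 * Real.pi * (a:ℝ)| = 2 * Real.pi * |(a:ℝ)| := by
            rw [abs_mul]
            congr 1
            rw [abs_of_pos (by positivity)]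
          rw [h1]
          have h2 : 0 ≤ 2 * Real.pi * |(a:ℝ)| := by positivity
          nlinarith [mul_le_mul_of_nonneg_left hm h2]
  -- summable majorant
  have hmaj : Summable (fun n : ℤ => K * r ^ n.natAbs) := by
    apply Summable.of_nat_of_neg
    · simpa using (summable_geometric_of_lt_one hr0 hr1).mul_left K
    · have : (fun n : ℕ => K * r ^ (-(n:ℤ)).natAbs) = fun n : ℕ => K * r ^ n := by
        funext n; congr 1; simp
      rw [this]
      exact (summable_geometric_of_lt_one hr0 hr1).mul_left K
  refine Summable.of_nonneg_of_le (fun n => norm_nonneg _) (fun n => ?_) hmaj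
  exact hbound n
end
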